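/- For every positive integer M and every t ∈ [(M+1)/(M+2), 1], one has g₂^[M]( ((M+1)·t − M) / (M·t + (1 − M)) ) = t. (Equivalently, g₂^{−M}(t) = ((M+1)t − M)/(Mt + (1−M)) on [(M+1)/(M+2), 1].) -/

import Mathlib

/-!
On `[1/2, 1)` the coordinate `u = 1/(1 - s)` conjugates `g₂ s = 1/(2 - s)` to the translation
`u ↦ u + 1`, and the map `t ↦ ((M+1)t − M)/(Mt + (1 − M))` to `u ↦ u − M`. Hence peeling off one
application of `g₂` lowers `M` by one, as long as the intermediate points stay in `[1/2, 1]`,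
which is exactly what the bound `t ≥ (M+1)/(M+2)` guarantees.
-/

/-- The element `g₂` of the Lodha–Moore group as a piecewise fractional linear map. -/
noncomputable def g₂ (t : ℝ) : ℝ :=
  if t ≤ 0 then t
  else if t ≤ 1 / 3 then t / (1 - t)
  else if t ≤ 1 / 2 then (4 * t - 1) / (5 * t - 1)
  else if t ≤ 1 then 1 / (2 - t)
  else t

lemma g₂_of_mem_Icc_half_one {s : ℝ} (hs : s ∈ Set.Icc (1 / 2 : ℝ) 1) : g₂ s = 1 / (2 - s) := by
  obtain ⟨h₁, h₂⟩ := hs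
  rcases h₁.eq_or_lt with rfl | h₁
  · norm_num [g₂]
  · rw [g₂, if_neg (by linarith), if_neg (by linarith), if_neg (by linarith), if_pos h₂]

noncomputable def g₂InvIterate (M : ℕ) (t : ℝ) : ℝ :=
  ((M + 1) * t - M) / (M * t + (1 - M))

lemma g₂InvIterate_succ_mem_Icc {M : ℕ} {t : ℝ} (ht : (M : ℝ) + 2 ≤ (M + 3) * t) (ht₁ : t ≤ 1) :
    g₂InvIterate (M + 1) t ∈ Set.Icc (1 / 2 : ℝ) 1 := by
  have hM : (0 : ℝ) ≤ M := M.cast_nonneg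
  have hden : 0 < ((M : ℝ) + 1) * t + (1 - (M + 1)) := by nlinarith
  unfold g₂InvIterate
  push_cast
  constructor
  · rw [le_div_iff₀ hden]; linarith
  · rw [div_le_one hden]; linarith

lemma g₂_g₂InvIterate_succ {M : ℕ} {t : ℝ} (ht : (M : ℝ) + 2 ≤ (M + 3) * t) (ht₁ : t ≤ 1) :
    g₂ (g₂InvIterate (M + 1) t) = g₂InvIterate M t := by
  have hM : (0 : ℝ) ≤ M := M.cast_nonneg
  have hden : ((M : ℝ) + 1) * t + (1 - (M + 1)) ≠ 0 := by nlinarith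
  have hsub : 2 - g₂InvIterate (M + 1) t
      = ((M : ℝ) * t + (1 - M)) / ((M + 1) * t + (1 - (M + 1))) := by
    rw [g₂InvIterate]
    push_cast
    field_simp
    ring
  rw [g₂_of_mem_Icc_half_one (g₂InvIterate_succ_mem_Icc ht ht₁), hsub, one_div_div, g₂InvIterate]
  ring

lemma iterate_g₂_g₂InvIterate {M : ℕ} {t : ℝ} (ht : (M : ℝ) + 1 ≤ (M + 2) * t) (ht₁ : t ≤ 1) :
    g₂^[M] (g₂InvIterate M t) = t := by
  induction M with
  | zero => simp [g₂InvIterate]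
  | succ M ih =>
    push_cast at ht
    rw [Function.iterate_succ_apply, g₂_g₂InvIterate_succ (by linarith) ht₁]
    exact ih (by linarith)

theorem g₂_inv_iterate_formula₂_general (M : ℕ) (t : ℝ)
    (ht : t ∈ Set.Icc (((M : ℝ) + 1) / ((M : ℝ) + 2)) 1) :
    g₂^[M] ((((M : ℝ) + 1) * t - (M : ℝ)) / ((M : ℝ) * t + (1 - (M : ℝ)))) = t := by
  have hlow : (M : ℝ) + 1 ≤ (M + 2) * t := by
    rw [← div_le_iff₀' (by positivity)]
    exact ht.1
  exact iterate_g₂_g₂InvIterate hlow ht.2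

/-- On `[(M+1)/(M+2), 1]`, the inverse of `g₂^[M]` is given by
`t ↦ ((M+1)t − M)/(Mt + (1 − M))`. -/
theorem g₂_inv_iterate_formula₂ (M : ℕ) (hM : 0 < M) (t : ℝ)
    (ht : t ∈ Set.Icc (((M : ℝ) + 1) / ((M : ℝ) + 2)) 1) :
    g₂^[M] ((((M : ℝ) + 1) * t - (M : ℝ)) / ((M : ℝ) * t + (1 - (M : ℝ)))) = t :=
  g₂_inv_iterate_formula₂_general M t ht
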